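/- Let b_j(θ; k) = (log λ_j)^k · e^{i(λ_j - π)(θ_r - θ_s)/2} · λ_j^{θ_r + θ_s} where λ_j = 2πj/n, k ∈ {0,1,2}, and |θ_r|, |θ_s| ≤ δ/(log n)^4 for a fixed δ > 0. Then there is a constant C (depending only on δ, k) such that for all n ≥ 2 and 1 ≤ j ≤ m < n/(4π): |b_j(θ;k) - b_{j+1}(θ;k)| ≤ C (log n)^k / j, uniformly over such θ. -/

import Mathlib

open Real Complex

/-- The weight `b_j(θ;k) = (log λ_j)^k e^{i(λ_j-π)(θ_r-θ_s)/2} λ_j^{θ_r+θ_s}`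
with `λ_j = 2πj/n`. -/
noncomputable def bWeight (n : ℕ) (k : ℕ) (θr θs : ℝ) (j : ℕ) : ℂ :=
  ((Real.log (2 * Real.pi * j / n)) ^ k : ℝ) *
    Complex.exp (Complex.I * ((2 * Real.pi * j / n - Real.pi) : ℝ) * ((θr - θs) / 2 : ℝ)) *
    (((2 * Real.pi * j / n) ^ (θr + θs) : ℝ) : ℂ)

/-! Write `b_j = w(λ_j)` with `w(t) = (log t)^k e^{i(t-π)φ} t^σ` (`freqWeight`), `λ_j = 2πj/n`
(`fourierFreq`), `φ = (θ_r - θ_s)/2` and `σ = θ_r + θ_s`. When `2π(j+1) ≤ n`, both `λ_j` and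
`λ_{j+1}` lie in `[1/n, 1]`, so their logarithms are bounded by `L = log n`. Splitting
`w(λ_j) - w(λ_{j+1})` factor by factor, the increments are controlled by `k L^{k-1} |Δ log λ|`,
`|φ| |Δλ|` and `|σ| e^{|σ| L} |Δ log λ|`, where `|Δ log λ| = log (1 + 1/j) ≤ 1/j` and
`|Δλ| = 2π/n ≤ 1/j`. The scale `|θ| ≤ δ/L^4` keeps `|φ|`, `|σ|` and `|σ| L` bounded in terms of
`δ` alone. -/

theorem norm_mul_mul_sub_mul_mul_le {R : Type*} [SeminormedRing R] (a b c a' b' c' : R) :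
    ‖a * b * c - a' * b' * c'‖ ≤
      ‖a - a'‖ * ‖b‖ * ‖c‖ + ‖a'‖ * ‖b - b'‖ * ‖c‖ + ‖a'‖ * ‖b'‖ * ‖c - c'‖ := by
  have h : a * b * c - a' * b' * c' =
      (a - a') * b * c + a' * (b - b') * c + a' * b' * (c - c') := by noncomm_ring
  rw [h]
  refine (norm_add₃_le).trans (add_le_add_three ?_ ?_ ?_) <;>
    exact (norm_mul_le _ _).trans (by gcongr; exact norm_mul_le _ _)

theorem Complex.norm_exp_I_mul_ofReal_sub_le (a b : ℝ) :
    ‖cexp (I * a) - cexp (I * b)‖ ≤ |a - b| := by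
  have h : cexp (I * a) - cexp (I * b) = cexp (I * b) * (cexp (I * ↑(a - b)) - 1) := by
    rw [mul_sub, ← Complex.exp_add]; push_cast; ring_nf
  rw [h, norm_mul, norm_exp_I_mul_ofReal, one_mul, ← Real.norm_eq_abs]
  exact norm_exp_I_mul_ofReal_sub_one_le

theorem Real.abs_exp_sub_exp_le {a b K : ℝ} (ha : a ≤ K) (hb : b ≤ K) :
    |rexp a - rexp b| ≤ rexp K * |a - b| := by
  wlog hba : b ≤ a generalizing a b
  · rw [abs_sub_comm, abs_sub_comm a]; exact this hb ha (le_of_not_ge hba)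
  have h : rexp a - rexp b = rexp a * (1 - rexp (b - a)) := by
    rw [mul_sub, ← Real.exp_add]; ring_nf
  rw [abs_of_nonneg (sub_nonneg.2 (Real.exp_le_exp.2 hba)), abs_of_nonneg (sub_nonneg.2 hba), h]
  exact mul_le_mul (Real.exp_le_exp.2 ha) (by linarith [Real.add_one_le_exp (b - a)])
    (by linarith [Real.exp_le_one_iff.2 (sub_nonpos.2 hba)]) (Real.exp_pos K).le

theorem mul_le_abs_mul_of_abs_le {t σ L : ℝ} (ht : |t| ≤ L) : t * σ ≤ |σ| * L :=
  (le_abs_self _).trans (by rw [abs_mul, mul_comm]; gcongr)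

theorem Real.rpow_le_exp_abs_mul {x σ L : ℝ} (hx : 0 < x) (hxL : |log x| ≤ L) :
    x ^ σ ≤ rexp (|σ| * L) := by
  rw [Real.rpow_def_of_pos hx]
  exact Real.exp_le_exp.2 (mul_le_abs_mul_of_abs_le hxL)

theorem Real.abs_rpow_sub_rpow_le {x y σ L : ℝ} (hx : 0 < x) (hy : 0 < y)
    (hxL : |log x| ≤ L) (hyL : |log y| ≤ L) :
    |x ^ σ - y ^ σ| ≤ rexp (|σ| * L) * (|σ| * |log x - log y|) := by
  rw [Real.rpow_def_of_pos hx, Real.rpow_def_of_pos hy, ← abs_mul, mul_comm σ, sub_mul]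
  exact Real.abs_exp_sub_exp_le (mul_le_abs_mul_of_abs_le hxL) (mul_le_abs_mul_of_abs_le hyL)

noncomputable def freqWeight (k : ℕ) (φ σ t : ℝ) : ℂ :=
  ((Real.log t ^ k : ℝ) : ℂ) * cexp (I * ((t - π) * φ : ℝ)) * ((t ^ σ : ℝ) : ℂ)

theorem norm_freqWeight_sub_le (k : ℕ) (φ σ : ℝ) {x y L : ℝ} (hx : 0 < x) (hy : 0 < y)
    (hxL : |Real.log x| ≤ L) (hyL : |Real.log y| ≤ L) :
    ‖freqWeight k φ σ x - freqWeight k φ σ y‖ ≤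
      rexp (|σ| * L) * (k * L ^ (k - 1) * |Real.log x - Real.log y| + L ^ k * |φ| * |x - y| +
        L ^ k * |σ| * |Real.log x - Real.log y|) := by
  have hL : 0 ≤ L := (abs_nonneg _).trans hxL
  have hpow : |Real.log x ^ k - Real.log y ^ k| ≤ k * L ^ (k - 1) * |Real.log x - Real.log y| := by
    calc _ ≤ |Real.log x - Real.log y| * k * max |Real.log x| |Real.log y| ^ (k - 1) :=
          abs_pow_sub_pow_le _ _ _
      _ ≤ |Real.log x - Real.log y| * k * L ^ (k - 1) := by gcongr; exact max_le hxL hyL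
      _ = _ := by ring
  have hcexp : ‖cexp (I * ((x - π) * φ : ℝ)) - cexp (I * ((y - π) * φ : ℝ))‖ ≤ |φ| * |x - y| :=
    (Complex.norm_exp_I_mul_ofReal_sub_le _ _).trans_eq <| by
      rw [← sub_mul, abs_mul, mul_comm]; ring_nf
  refine (norm_mul_mul_sub_mul_mul_le _ _ _ _ _ _).trans ?_
  simp only [← Complex.ofReal_sub, Complex.norm_real, Real.norm_eq_abs, norm_exp_I_mul_ofReal,
    abs_pow, abs_of_pos (Real.rpow_pos_of_pos hx σ)]
  have hxσ := Real.rpow_le_exp_abs_mul (σ := σ) hx hxL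
  have hyk : |Real.log y| ^ k ≤ L ^ k := by gcongr
  have hσ := Real.abs_rpow_sub_rpow_le (σ := σ) hx hy hxL hyL
  calc _ ≤ k * L ^ (k - 1) * |Real.log x - Real.log y| * 1 * rexp (|σ| * L) +
        L ^ k * (|φ| * |x - y|) * rexp (|σ| * L) +
        L ^ k * 1 * (rexp (|σ| * L) * (|σ| * |Real.log x - Real.log y|)) := by gcongr
    _ = _ := by ring

noncomputable def fourierFreq (n j : ℕ) : ℝ := 2 * π * j / n

theorem bWeight_eq_freqWeight (n k : ℕ) (θr θs : ℝ) (j : ℕ) :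
    bWeight n k θr θs j = freqWeight k ((θr - θs) / 2) (θr + θs) (fourierFreq n j) := by
  simp only [bWeight, freqWeight, fourierFreq]
  push_cast
  ring_nf

theorem fourierFreq_pos {n j : ℕ} (hn : 0 < n) (hj : 0 < j) : 0 < fourierFreq n j := by
  unfold fourierFreq; positivity

theorem abs_log_fourierFreq_le {n j : ℕ} (hj : 1 ≤ j) (hjn : 2 * π * j ≤ n) :
    |Real.log (fourierFreq n j)| ≤ Real.log n := by
  have h1 : 1 ≤ 2 * π * j := by
    have : (1 : ℝ) ≤ j := by exact_mod_cast hj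
    nlinarith [Real.pi_gt_three]
  have hlog := Real.log_le_log (by positivity) hjn
  have hpos := Real.log_nonneg h1
  rw [fourierFreq, Real.log_div (by positivity) (by linarith), abs_le]
  constructor <;> linarith

theorem abs_log_fourierFreq_sub_succ_le {n j : ℕ} (hn : 0 < n) (hj : 0 < j) :
    |Real.log (fourierFreq n j) - Real.log (fourierFreq n (j + 1))| ≤ 1 / j := by
  have hj' : (0 : ℝ) < j := by exact_mod_cast hj
  have hratio : fourierFreq n (j + 1) / fourierFreq n j = 1 + 1 / j := by
    simp only [fourierFreq]; push_cast; field_simp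
  have hle : fourierFreq n j ≤ fourierFreq n (j + 1) := by
    simp only [fourierFreq]; gcongr; simp
  rw [abs_sub_comm, abs_of_nonneg (sub_nonneg.2 (Real.log_le_log (fourierFreq_pos hn hj) hle)),
    ← Real.log_div (fourierFreq_pos hn (Nat.succ_pos j)).ne' (fourierFreq_pos hn hj).ne', hratio]
  linarith [Real.log_le_sub_one_of_pos (by positivity : (0 : ℝ) < 1 + 1 / j)]

theorem abs_fourierFreq_sub_succ_le {n j : ℕ} (hj : 0 < j) (hjn : 2 * π * j ≤ n) :
    |fourierFreq n j - fourierFreq n (j + 1)| ≤ 1 / j := by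
  have hj' : (0 : ℝ) < j := by exact_mod_cast hj
  have hn : (0 : ℝ) < n := lt_of_lt_of_le (by positivity) hjn
  have h : fourierFreq n j - fourierFreq n (j + 1) = -(2 * π / n) := by
    simp only [fourierFreq]; push_cast; ring
  rw [h, abs_neg, abs_of_pos (by positivity), div_le_div_iff₀ hn hj']
  linarith

theorem natCast_mul_pow_pred_le {ℓ L : ℝ} (hℓ : 0 < ℓ) (hL : ℓ ≤ L) (k : ℕ) :
    k * L ^ (k - 1) ≤ k * (L ^ k / ℓ) := by
  rcases k with _ | k
  · simp
  rw [Nat.add_sub_cancel]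
  gcongr
  rw [le_div_iff₀ hℓ, pow_succ]
  gcongr
  exact (pow_pos (hℓ.trans_le hL) k).le

theorem two_pi_mul_succ_le {n m j : ℕ} (hj : 1 ≤ j) (hjm : j ≤ m)
    (hm : (m : ℝ) < n / (4 * π)) : 2 * π * (j + 1 : ℕ) ≤ n := by
  have hjn : (j : ℝ) * (4 * π) < n :=
    (lt_div_iff₀ (by positivity)).1 (lt_of_le_of_lt (by exact_mod_cast hjm) hm)
  have : (1 : ℝ) ≤ j := by exact_mod_cast hj
  push_cast
  nlinarith [Real.pi_pos]

theorem abs_mul_log_le {σ δ : ℝ} {n : ℕ} (hδ : 0 ≤ δ) (hn : 2 ≤ n)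
    (hσ : |σ| ≤ 2 * (δ / Real.log n ^ 4)) : |σ| * Real.log n ≤ 2 * δ / Real.log 2 ^ 3 := by
  have hL : Real.log 2 ≤ Real.log n := Real.log_le_log two_pos (by exact_mod_cast hn)
  calc |σ| * Real.log n ≤ 2 * (δ / Real.log n ^ 4) * Real.log n := by gcongr
    _ = 2 * δ / Real.log n ^ 3 := by field_simp
    _ ≤ 2 * δ / Real.log 2 ^ 3 := by gcongr

theorem stmt_6_general (δ : ℝ) (hδ : 0 < δ) (k : ℕ) :
    ∃ C : ℝ, ∀ n m j : ℕ, 2 ≤ n → 1 ≤ j → j ≤ m → (m : ℝ) < n / (4 * Real.pi) →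
      ∀ θr θs : ℝ, |θr| ≤ δ / (Real.log n) ^ 4 → |θs| ≤ δ / (Real.log n) ^ 4 →
        ‖bWeight n k θr θs j - bWeight n k θr θs (j + 1)‖ ≤ C * (Real.log n) ^ k / j := by
  set ℓ := Real.log 2
  refine ⟨rexp (2 * δ / ℓ ^ 3) * (k / ℓ + 3 * (δ / ℓ ^ 4)), ?_⟩
  intro n m j hn hj hjm hm θr θs hθr hθs
  set L := Real.log n
  have hℓ : 0 < ℓ := Real.log_pos one_lt_two
  have hL : ℓ ≤ L := Real.log_le_log two_pos (by exact_mod_cast hn)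
  have hjn := two_pi_mul_succ_le hj hjm hm
  have hjn' : 2 * π * j ≤ n := le_trans (by gcongr; simp) hjn
  have hτ : δ / L ^ 4 ≤ δ / ℓ ^ 4 := by gcongr
  have hφ : |(θr - θs) / 2| ≤ δ / ℓ ^ 4 := by
    rw [abs_div, abs_two]; linarith [abs_sub θr θs]
  have hσ : |θr + θs| ≤ 2 * (δ / L ^ 4) := by linarith [abs_add_le θr θs]
  rw [bWeight_eq_freqWeight, bWeight_eq_freqWeight]
  refine (norm_freqWeight_sub_le k _ _ (fourierFreq_pos (by omega) hj)
    (fourierFreq_pos (by omega) (by omega)) (abs_log_fourierFreq_le hj hjn')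
    (abs_log_fourierFreq_le (by omega) hjn)).trans ?_
  calc _ ≤ rexp (2 * δ / ℓ ^ 3) * (k * (L ^ k / ℓ) * (1 / j) + L ^ k * (δ / ℓ ^ 4) * (1 / j) +
        L ^ k * (2 * (δ / ℓ ^ 4)) * (1 / j)) := by
        gcongr rexp ?_ * (?_ * ?_ + _ * ?_ * ?_ + _ * ?_ * ?_)
        · exact abs_mul_log_le hδ.le hn hσ
        · exact natCast_mul_pow_pred_le hℓ hL k
        · exact abs_log_fourierFreq_sub_succ_le (by omega) hj
        · exact abs_fourierFreq_sub_succ_le hj hjn'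
        · linarith
        · exact abs_log_fourierFreq_sub_succ_le (by omega) hj
    _ = _ := by ring

theorem stmt_6 (δ : ℝ) (hδ : 0 < δ) (k : ℕ) (hk : k ∈ ({0, 1, 2} : Set ℕ)) :
    ∃ C : ℝ, ∀ n m j : ℕ, 2 ≤ n → 1 ≤ j → j ≤ m → (m : ℝ) < n / (4 * Real.pi) →
      ∀ θr θs : ℝ, |θr| ≤ δ / (Real.log n) ^ 4 → |θs| ≤ δ / (Real.log n) ^ 4 →
        ‖bWeight n k θr θs j - bWeight n k θr θs (j + 1)‖ ≤ C * (Real.log n) ^ k / j :=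
  stmt_6_general δ hδ k
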